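/- arXiv:1705.05564 — 3 statements merged into one kernel-verified Lean document; each statement's English description precedes it below -/
import Mathlib

section
/- Let θ be a bijective literal (anti)morphism on A*, let Y be a code with Y* the smallest θ-invariant free submonoid of A* containing a θ-invariant set X ⊆ A*. Then every word y ∈ Y occurs as the initial factor of some word of X, i.e., for every y ∈ Y there exists x ∈ X whose unique factorization over Y begins with y. -/
open List

variable {α : Type*}

/-- The submonoid (as a set) generated by `X`: all concatenations of words of `X`. -/
def StarSet (X : Set (List α)) : Set (List α) :=
  {w | ∃ l : List (List α), (∀ u ∈ l, u ∈ X) ∧ l.flatten = w}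

/-- `X` is a (variable-length) code: unique factorization over `X`. -/
def IsCode (X : Set (List α)) : Prop :=
  ∀ l m : List (List α), (∀ u ∈ l, u ∈ X) → (∀ u ∈ m, u ∈ X) →
    l.flatten = m.flatten → l = m

def Factor (u w : List α) : Prop := ∃ p s, p ++ u ++ s = w

def Factors (S : Set (List α)) : Set (List α) := {u | ∃ w ∈ S, Factor u w}

def Complete (X : Set (List α)) : Prop := Factors (StarSet X) = Set.univ

def Thin (X : Set (List α)) : Prop := Factors X ≠ Set.univ

def Invariant (θ : List α → List α) (X : Set (List α)) : Prop := θ '' X = X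

def IsSubmonoidSet (M : Set (List α)) : Prop :=
  [] ∈ M ∧ ∀ u ∈ M, ∀ v ∈ M, u ++ v ∈ M

/-- Stability (equidivisibility) condition, characterizing free submonoids of `A*`. -/
def Stable (M : Set (List α)) : Prop :=
  ∀ u v w, u ∈ M → u ++ v ∈ M → w ∈ M → v ++ w ∈ M → v ∈ M

def FreeSubmonoid (M : Set (List α)) : Prop := IsSubmonoidSet M ∧ Stable M

/-- Minimal generating set of a submonoid: `(M \ {ε}) \ (M \ {ε})²`. -/
def MinGen (M : Set (List α)) : Set (List α) :=
  {w | w ∈ M ∧ w ≠ [] ∧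
    ¬ ∃ u v, u ∈ M ∧ v ∈ M ∧ u ≠ [] ∧ v ≠ [] ∧ u ++ v = w}

def IsMorphism (θ : List α → List α) : Prop :=
  ∀ u v, θ (u ++ v) = θ u ++ θ v

def IsAntimorphism (θ : List α → List α) : Prop :=
  θ [] = [] ∧ ∀ u v, θ (u ++ v) = θ v ++ θ u

/-- `θ` is literal: the image of a letter is a letter. -/
def Literal (θ : List α → List α) : Prop := ∀ a : α, ∃ b : α, θ [a] = [b]

/-- `θ` is a bijective literal (anti)morphism of the free monoid. -/
def LitAnti (θ : List α → List α) : Prop :=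
  Function.Bijective θ ∧ Literal θ ∧ (IsMorphism θ ∨ IsAntimorphism θ)

/-- The set `{θ^i z : i ∈ ℤ}` for a bijective `θ` (negative powers are
captured by `θ^[i] w = z`). -/
def OrbitZ (θ : List α → List α) (z : List α) : Set (List α) :=
  {w | ∃ i : ℕ, θ^[i] z = w ∨ θ^[i] w = z}

def IsPrefixCode (X : Set (List α)) : Prop :=
  [] ∉ X ∧ ∀ x ∈ X, ∀ u, x ++ u ∈ X → u = []

def IsSuffixCode (X : Set (List α)) : Prop :=
  [] ∉ X ∧ ∀ x ∈ X, ∀ u, u ++ x ∈ X → u = []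

/-- `X^k`: products of exactly `k` words of `X`. -/
def PowSet (X : Set (List α)) (k : ℕ) : Set (List α) :=
  {w | ∃ l : List (List α), l.length = k ∧ (∀ u ∈ l, u ∈ X) ∧ l.flatten = w}

/-- Circular code: `x₁⋯xₘ = s·y₂⋯yₙ·p` with `y₁ = ps ∈ X`, `s ≠ ε`
forces `m = n`, `p = ε` and `xᵢ = yᵢ`. -/
def IsCircularCode (X : Set (List α)) : Prop :=
  ∀ (l ys : List (List α)) (p s : List α),
    (∀ u ∈ l, u ∈ X) → p ++ s ∈ X → (∀ u ∈ ys, u ∈ X) → s ≠ [] →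
    l.flatten = s ++ ys.flatten ++ p → l = (p ++ s) :: ys ∧ p = []

/-- A word is overlapping-free if no proper nonempty prefix equals a suffix. -/
def OverlapFree (w : List α) : Prop :=
  ¬ ∃ u v : List α, u ≠ [] ∧ u.length ≤ w.length - 1 ∧ u ++ w = w ++ v

/-- `X` is a regular (rational) language: accepted by a finite automaton. -/
def IsRegularSet (X : Set (List α)) : Prop :=
  ∃ (σ : Type) (_ : Fintype σ) (M : DFA α σ), M.accepts = X

/-!
Let `I` and `F` be the words of `Y` that occur as first, respectively last, factor of the
`Y`-factorization of a word of `X`. The words of `Y*` whose factorization starts in `I` and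
ends in `F` form a submonoid containing `X`; it is stable because `Y` is a code (the first
factor of `v` is that of `vw`, the last that of `uv`), and it is `θ`-invariant because `θ` maps
factorizations to factorizations, preserving first and last factors when it is a morphism and
exchanging them when it is an antimorphism (and `θ(Y) = Y`, as `Y` is the minimal generating
set of the `θ`-invariant monoid `Y*`). By minimality it contains `Y*`, so each `y ∈ Y`
lies in `I`.
-/

open Function

def IsFactorization (Y : Set (List α)) (l : List (List α)) (w : List α) : Prop :=
  (∀ u ∈ l, u ∈ Y) ∧ l.flatten = w

def initialFactors (Y X : Set (List α)) : Set (List α) :=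
  {z | ∃ x ∈ X, ∃ l, IsFactorization Y l x ∧ z ∈ l.head?}

def finalFactors (Y X : Set (List α)) : Set (List α) :=
  {z | ∃ x ∈ X, ∃ l, IsFactorization Y l x ∧ z ∈ l.getLast?}

def framedStar (Y I F : Set (List α)) : Set (List α) :=
  {w | ∃ l, IsFactorization Y l w ∧ (∀ z ∈ l.head?, z ∈ I) ∧ (∀ z ∈ l.getLast?, z ∈ F)}

section Factorization

variable {Y : Set (List α)} {l m : List (List α)} {u v w : List α}

theorem isFactorization_singleton {y : List α} (hy : y ∈ Y) : IsFactorization Y [y] y :=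
  ⟨by simpa using hy, by simp⟩

theorem IsFactorization.append (hl : IsFactorization Y l u) (hm : IsFactorization Y m v) :
    IsFactorization Y (l ++ m) (u ++ v) :=
  ⟨fun a ha => (List.mem_append.mp ha).elim (hl.1 a) (hm.1 a),
    by rw [List.flatten_append, hl.2, hm.2]⟩

theorem IsCode.eq_of_isFactorization (hY : IsCode Y) (hl : IsFactorization Y l w)
    (hm : IsFactorization Y m w) : l = m :=
  hY l m hl.1 hm.1 (hl.2.trans hm.2.symm)

end Factorization

section Framed

variable {Y I F : Set (List α)}

theorem framedStar_subset_starSet : framedStar Y I F ⊆ StarSet Y :=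
  fun _ ⟨l, hl, _⟩ => ⟨l, hl⟩

theorem isSubmonoidSet_framedStar : IsSubmonoidSet (framedStar Y I F) := by
  refine ⟨⟨[], ⟨by simp, rfl⟩, by simp, by simp⟩, ?_⟩
  rintro u ⟨lu, hlu, hIu, hFu⟩ v ⟨lv, hlv, hIv, hFv⟩
  refine ⟨lu ++ lv, hlu.append hlv, ?_, ?_⟩
  · rcases eq_or_ne lu [] with rfl | hne
    · simpa using hIv
    · rwa [List.head?_append_of_ne_nil _ hne]
  · rcases eq_or_ne lv [] with rfl | hne
    · simpa using hFu
    · rwa [List.getLast?_append_of_ne_nil _ hne]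

theorem stable_framedStar (hY : IsCode Y) (hstar : Stable (StarSet Y)) :
    Stable (framedStar Y I F) := by
  intro u v w hu huv hw hvw
  obtain ⟨lv, hlv⟩ : ∃ lv, IsFactorization Y lv v :=
    hstar u v w (framedStar_subset_starSet hu) (framedStar_subset_starSet huv)
      (framedStar_subset_starSet hw) (framedStar_subset_starSet hvw)
  obtain ⟨lu, hlu, -⟩ := hu
  obtain ⟨lw, hlw, -⟩ := hw
  obtain ⟨m, hm, hIm, -⟩ := hvw
  obtain ⟨n, hn, -, hFn⟩ := huv
  obtain rfl := hY.eq_of_isFactorization hm (hlv.append hlw)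
  obtain rfl := hY.eq_of_isFactorization hn (hlu.append hlv)
  refine ⟨lv, hlv, fun z hz => hIm z ?_, fun z hz => hFn z ?_⟩
  · rw [List.head?_append, Option.mem_def.mp hz]; rfl
  · rw [List.getLast?_append, Option.mem_def.mp hz]; rfl

theorem IsCode.mem_of_mem_framedStar (hY : IsCode Y) {y : List α} (hy : y ∈ Y)
    (h : y ∈ framedStar Y I F) : y ∈ I := by
  obtain ⟨l, hl, hI, -⟩ := h
  obtain rfl := hY.eq_of_isFactorization hl (isFactorization_singleton hy)
  exact hI y rfl

end Framed

theorem subset_framedStar {X Y : Set (List α)} (hX : X ⊆ StarSet Y) :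
    X ⊆ framedStar Y (initialFactors Y X) (finalFactors Y X) := by
  intro x hx
  obtain ⟨l, hl⟩ := hX hx
  exact ⟨l, hl, fun z hz => ⟨x, hx, l, hl, hz⟩, fun z hz => ⟨x, hx, l, hl, hz⟩⟩

theorem exists_eq_append_of_mem_initialFactors {X Y : Set (List α)} {y : List α}
    (hy : y ∈ initialFactors Y X) :
    ∃ x ∈ X, ∃ l : List (List α), (∀ u ∈ l, u ∈ Y) ∧ x = y ++ l.flatten := by
  obtain ⟨x, hx, _ | ⟨z, t⟩, ⟨hl, rfl⟩, hz⟩ := hy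
  · cases hz
  · obtain rfl : z = y := Option.some_injective _ hz
    exact ⟨_, hx, t, fun u hu => hl u (List.mem_cons_of_mem _ hu), rfl⟩

section Morphism

variable {θ : List α → List α}

theorem IsMorphism.map_nil (h : IsMorphism θ) : θ [] = [] := by
  have := congrArg List.length (h [] [])
  simp only [List.append_nil, List.length_append, left_eq_add, List.length_eq_zero_iff] at this
  exact this

theorem IsMorphism.map_flatten (h : IsMorphism θ) (l : List (List α)) :
    θ l.flatten = (l.map θ).flatten := by
  induction l with
  | nil => exact h.map_nil
  | cons u t ih => simp [h u, ih]

theorem IsAntimorphism.map_flatten (h : IsAntimorphism θ) (l : List (List α)) :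
    θ l.flatten = (l.map θ).reverse.flatten := by
  induction l with
  | nil => exact h.1
  | cons u t ih => simp [h.2 u, ih]

theorem invariant_iff_forall_mem_iff (hθ : Bijective θ) {M : Set (List α)} :
    Invariant θ M ↔ ∀ w, θ w ∈ M ↔ w ∈ M := by
  refine ⟨fun (h : θ '' M = M) w => by simpa only [h] using hθ.1.mem_set_image (s := M) (a := w),
    fun h => Set.ext fun w => ?_⟩
  obtain ⟨v, rfl⟩ := hθ.2 w
  rw [hθ.1.mem_set_image, h]

theorem invariant_minGen (hθ : Bijective θ) (hmor : IsMorphism θ ∨ IsAntimorphism θ)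
    {M : Set (List α)} (hM : Invariant θ M) : Invariant θ (MinGen M) := by
  rw [invariant_iff_forall_mem_iff hθ] at hM ⊢
  have hne : ∀ w, θ w ≠ [] ↔ w ≠ [] :=
    fun w => (hθ.1.eq_iff' (hmor.elim IsMorphism.map_nil And.left)).not
  have hsplit : ∀ w, (∃ u v, u ∈ M ∧ v ∈ M ∧ u ≠ [] ∧ v ≠ [] ∧ u ++ v = θ w) ↔
      ∃ u v, u ∈ M ∧ v ∈ M ∧ u ≠ [] ∧ v ≠ [] ∧ u ++ v = w := by
    intro w
    rw [hθ.2.exists₂]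
    simp only [hM, hne]
    rcases hmor with hmor | hmor
    · simp only [fun u v => (hmor u v).symm, hθ.1.eq_iff]
    · simp only [← hmor.2, hθ.1.eq_iff]
      constructor <;> rintro ⟨u, v, hu, hv, hu0, hv0, rfl⟩ <;> exact ⟨v, u, hv, hu, hv0, hu0, rfl⟩
  intro w
  simp only [MinGen, Set.mem_ofPred_eq, hM, hne, hsplit]

end Morphism

structure LiftsFactorizations (θ : List α → List α) (Y : Set (List α))
    (τ : List (List α) → List (List α)) : Prop where
  surjective : Surjective τ
  isFactorization_iff : ∀ l w, IsFactorization Y (τ l) (θ w) ↔ IsFactorization Y l w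

section Lift

variable {θ : List α → List α} {X Y : Set (List α)}

theorem IsMorphism.liftsFactorizations (hmor : IsMorphism θ) (hθ : Bijective θ)
    (hY : ∀ u, θ u ∈ Y ↔ u ∈ Y) : LiftsFactorizations θ Y (List.map θ) where
  surjective := hθ.2.list_map
  isFactorization_iff l w := by
    simp only [IsFactorization, List.forall_mem_map, hY, ← hmor.map_flatten, hθ.1.eq_iff]

theorem IsAntimorphism.liftsFactorizations (hmor : IsAntimorphism θ) (hθ : Bijective θ)
    (hY : ∀ u, θ u ∈ Y ↔ u ∈ Y) : LiftsFactorizations θ Y (fun l => (l.map θ).reverse) where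
  surjective := List.reverse_surjective.comp hθ.2.list_map
  isFactorization_iff l w := by
    simp only [IsFactorization, List.mem_reverse, List.forall_mem_map, hY, ← hmor.map_flatten,
      hθ.1.eq_iff]

variable {τ : List (List α) → List (List α)} {Q Q' : List (List α) → Prop}

theorem LiftsFactorizations.exists_isFactorization_iff (h : LiftsFactorizations θ Y τ)
    (hQ : ∀ l, Q' (τ l) ↔ Q l) (w : List α) :
    (∃ l, IsFactorization Y l (θ w) ∧ Q' l) ↔ ∃ l, IsFactorization Y l w ∧ Q l := by
  rw [h.surjective.exists]
  simp only [h.isFactorization_iff, hQ]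

theorem LiftsFactorizations.exists_mem_isFactorization_iff (h : LiftsFactorizations θ Y τ)
    (hθ : Surjective θ) (hX : ∀ x, θ x ∈ X ↔ x ∈ X) (hQ : ∀ l, Q' (τ l) ↔ Q l) :
    (∃ x ∈ X, ∃ l, IsFactorization Y l x ∧ Q' l) ↔ ∃ x ∈ X, ∃ l, IsFactorization Y l x ∧ Q l := by
  rw [hθ.exists]
  simp only [hX, h.exists_isFactorization_iff hQ]

theorem invariant_framedStar (hθ : Bijective θ) (hmor : IsMorphism θ ∨ IsAntimorphism θ)
    (hX : Invariant θ X) (hY : Invariant θ Y) :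
    Invariant θ (framedStar Y (initialFactors Y X) (finalFactors Y X)) := by
  rw [invariant_iff_forall_mem_iff hθ] at hX hY ⊢
  rcases hmor with hmor | hmor
  · have h := hmor.liftsFactorizations hθ hY
    have hI (z : List α) : θ z ∈ initialFactors Y X ↔ z ∈ initialFactors Y X :=
      h.exists_mem_isFactorization_iff hθ.2 hX fun l => by
        rw [List.head?_map, Option.mem_map_of_injective hθ.1]
    have hF (z : List α) : θ z ∈ finalFactors Y X ↔ z ∈ finalFactors Y X :=
      h.exists_mem_isFactorization_iff hθ.2 hX fun l => by
        rw [List.getLast?_map, Option.mem_map_of_injective hθ.1]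
    exact h.exists_isFactorization_iff fun l => by
      simp only [List.head?_map, List.getLast?_map, Option.forall_mem_map, hI, hF]
  · have h := hmor.liftsFactorizations hθ hY
    have hI (z : List α) : θ z ∈ initialFactors Y X ↔ z ∈ finalFactors Y X :=
      h.exists_mem_isFactorization_iff hθ.2 hX fun l => by
        rw [List.head?_reverse, List.getLast?_map, Option.mem_map_of_injective hθ.1]
    have hF (z : List α) : θ z ∈ finalFactors Y X ↔ z ∈ initialFactors Y X :=
      h.exists_mem_isFactorization_iff hθ.2 hX fun l => by
        rw [List.getLast?_reverse, List.head?_map, Option.mem_map_of_injective hθ.1]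
    exact h.exists_isFactorization_iff fun l => by
      simp only [List.head?_reverse, List.getLast?_reverse, List.head?_map, List.getLast?_map,
        Option.forall_mem_map, hI, hF, and_comm]

end Lift

theorem stmt3 (θ : List α → List α) (hθ : LitAnti θ)
    (X Y : Set (List α)) (hXinv : Invariant θ X) (hYcode : IsCode Y)
    (hfree : FreeSubmonoid (StarSet Y)) (hinv : Invariant θ (StarSet Y))
    (hsub : X ⊆ StarSet Y)
    (hmin : ∀ M, FreeSubmonoid M → Invariant θ M → X ⊆ M → StarSet Y ⊆ M)
    (hgen : Y = MinGen (StarSet Y)) :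
    ∀ y ∈ Y, ∃ x ∈ X, ∃ l : List (List α),
      (∀ u ∈ l, u ∈ Y) ∧ x = y ++ l.flatten := by
  obtain ⟨hbij, -, hmor⟩ := hθ
  have hYinv : Invariant θ Y := hgen ▸ invariant_minGen hbij hmor hinv
  have hframed : StarSet Y ⊆ framedStar Y (initialFactors Y X) (finalFactors Y X) :=
    hmin _ ⟨isSubmonoidSet_framedStar, stable_framedStar hYcode hfree.2⟩
      (invariant_framedStar hbij hmor hXinv hYinv) (subset_framedStar hsub)
  intro y hy
  exact exists_eq_append_of_mem_initialFactors <|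
    hYcode.mem_of_mem_framedStar hy (hframed ⟨[y], isFactorization_singleton hy⟩)
end

section
/- With X a non-complete θ-invariant code, y ∉ F(X*) with distinct first/last letters and |y| ≥ 2, z = ā^{|y|} y a^{|y|}, and Z = {θⁱ(z) : i ∈ ℤ}: the set X* Z is a prefix code, i.e., no word x₁z₁ with x₁ ∈ X*, z₁ ∈ Z is a proper prefix of another word x₂z₂ with x₂ ∈ X*, z₂ ∈ Z. -/
open List

variable {α : Type*}

/-!
Every θ-image of `z = āⁿ y aⁿ` (`n = |y|`) has the shape `pⁿ m qⁿ` with `m = c t d`, `c ∉ {p, d}`,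
`d ≠ q` and `m ∉ F(X*)`: θ maps letters bijectively to letters and preserves `F(X*)`, as does its
inverse. If `x₁z₁u = x₂z₂` with `u ≠ ε`, then `x₂ = x₁v` and `z₁u = vz₂` with `v ≠ ε`. A shift
`0 < |v| < 2n` puts a border letter of one middle block against a letter of the other word that it
must differ from, so `|v| ≥ 2n`; but then the middle block of `z₁` is a factor of `x₂ ∈ X*`.
-/

lemma factor_iff_isInfix {u w : List α} : Factor u w ↔ u <:+: w := Iff.rfl

section StarSet

variable {X : Set (List α)}

lemma nil_mem_starSet : ([] : List α) ∈ StarSet X := ⟨[], by simp, rfl⟩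

lemma mem_starSet_of_mem {u : List α} (hu : u ∈ X) : u ∈ StarSet X :=
  ⟨[u], by simpa, by simp⟩

lemma append_mem_starSet {u v : List α} (hu : u ∈ StarSet X) (hv : v ∈ StarSet X) :
    u ++ v ∈ StarSet X := by
  obtain ⟨l, hl, rfl⟩ := hu
  obtain ⟨m, hm, rfl⟩ := hv
  refine ⟨l ++ m, fun w hw => ?_, by simp⟩
  rcases List.mem_append.1 hw with h | h
  exacts [hl w h, hm w h]

end StarSet

namespace LitAnti

variable {θ : List α → List α}

lemma map_nil (hθ : LitAnti θ) : θ [] = [] := by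
  rcases hθ.2.2 with hm | hA
  · have h := congrArg List.length (hm [] [])
    simp only [List.append_nil, List.length_append] at h
    exact List.eq_nil_of_length_eq_zero (by omega)
  · exact hA.1

lemma length_map (hθ : LitAnti θ) (w : List α) : (θ w).length = w.length := by
  induction w with
  | nil => simp [hθ.map_nil]
  | cons a w ih =>
    obtain ⟨b, hb⟩ := hθ.2.1 a
    rcases hθ.2.2 with hm | hA
    · rw [← List.singleton_append, hm, hb]; simp [ih]
    · rw [← List.singleton_append, hA.2, hb]; simp [ih]

lemma map_replicate (hθ : LitAnti θ) (n : ℕ) {a b : α} (hab : θ [a] = [b]) :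
    θ (replicate n a) = replicate n b := by
  induction n with
  | zero => simpa using hθ.map_nil
  | succ n ih =>
    rcases hθ.2.2 with hm | hA
    · rw [replicate_succ, ← List.singleton_append, hm, hab, ih]; rfl
    · rw [replicate_succ, ← List.singleton_append, hA.2, hab, ih, ← replicate_succ']

lemma map_isInfix (hθ : LitAnti θ) {u w : List α} (h : u <:+: w) : θ u <:+: θ w := by
  obtain ⟨p, s, rfl⟩ := h
  rcases hθ.2.2 with hm | hA
  · exact ⟨θ p, θ s, by rw [hm, hm]⟩
  · exact ⟨θ s, θ p, by rw [hA.2, hA.2, List.append_assoc]⟩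

variable {X : Set (List α)}

lemma map_mem_starSet (hθ : LitAnti θ) (hinv : Invariant θ X) {w : List α}
    (hw : w ∈ StarSet X) : θ w ∈ StarSet X := by
  obtain ⟨l, hl, rfl⟩ := hw
  induction l with
  | nil => simpa [hθ.map_nil] using (nil_mem_starSet : ([] : List α) ∈ StarSet X)
  | cons u l ih =>
    have hu : θ u ∈ X := hinv ▸ ⟨u, hl u (by simp), rfl⟩
    have hl' := ih fun v hv => hl v (by simp [hv])
    rw [List.flatten_cons]
    rcases hθ.2.2 with hm | hA
    · rw [hm]; exact append_mem_starSet (mem_starSet_of_mem hu) hl'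
    · rw [hA.2]; exact append_mem_starSet hl' (mem_starSet_of_mem hu)

lemma map_mem_factors (hθ : LitAnti θ) (hinv : Invariant θ X) {u : List α}
    (hu : u ∈ Factors (StarSet X)) : θ u ∈ Factors (StarSet X) := by
  obtain ⟨w, hw, huw⟩ := hu
  exact ⟨θ w, hθ.map_mem_starSet hinv hw, factor_iff_isInfix.2 (hθ.map_isInfix huw)⟩

lemma exists_leftInverse (hθ : LitAnti θ) (hinv : Invariant θ X) :
    ∃ ψ : List α → List α, LitAnti ψ ∧ Invariant ψ X ∧ Function.LeftInverse ψ θ := by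
  let e := Equiv.ofBijective θ hθ.1
  have hψθ : Function.LeftInverse e.symm θ := e.symm_apply_apply
  have hθψ : Function.RightInverse e.symm θ := e.apply_symm_apply
  have hlit : Literal e.symm := by
    intro b
    obtain ⟨w, hw⟩ := hθ.1.2 [b]
    obtain ⟨c, rfl⟩ : ∃ c, w = [c] :=
      List.length_eq_one_iff.1 (by simpa [hw] using (hθ.length_map w).symm)
    exact ⟨c, by rw [← hw, hψθ]⟩
  have hmor : IsMorphism e.symm ∨ IsAntimorphism e.symm := by
    rcases hθ.2.2 with hm | hA
    · exact Or.inl fun u v => hθ.1.1 (by rw [hθψ, hm, hθψ, hθψ])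
    · exact Or.inr ⟨hθ.1.1 (by rw [hθψ, hA.1]),
        fun u v => hθ.1.1 (by rw [hθψ, hA.2, hθψ, hθψ])⟩
  have hinvψ : Invariant e.symm X := by
    ext w
    constructor
    · rintro ⟨v, hv, rfl⟩
      obtain ⟨v', hv', rfl⟩ := hinv.symm ▸ hv
      rwa [hψθ]
    · exact fun hw => ⟨θ w, hinv ▸ ⟨w, hw, rfl⟩, hψθ w⟩
  exact ⟨e.symm, ⟨e.symm.bijective, hlit, hmor⟩, hinvψ, hψθ⟩

lemma map_mem_factors_iff (hθ : LitAnti θ) (hinv : Invariant θ X) {u : List α} :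
    θ u ∈ Factors (StarSet X) ↔ u ∈ Factors (StarSet X) := by
  refine ⟨fun h => ?_, hθ.map_mem_factors hinv⟩
  obtain ⟨ψ, hψ, hψX, hψθ⟩ := hθ.exists_leftInverse hinv
  simpa [hψθ u] using hψ.map_mem_factors hψX h

end LitAnti

lemma mem_orbitZ_induction {θ ψ : List α → List α} (hψθ : Function.LeftInverse ψ θ)
    {P : List α → Prop} (hθP : ∀ w, P w → P (θ w)) (hψP : ∀ w, P w → P (ψ w))
    {z w : List α} (hz : P z) (hw : w ∈ OrbitZ θ z) : P w := by
  have iterate_mem : ∀ (f : List α → List α), (∀ w, P w → P (f w)) → ∀ i, P (f^[i] z) :=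
    fun f hf i => by
      induction i with
      | zero => exact hz
      | succ i ih => rw [Function.iterate_succ_apply']; exact hf _ ih
  obtain ⟨i, rfl | h⟩ := hw
  · exact iterate_mem θ hθP i
  · rw [← hψθ.iterate i w, h]
    exact iterate_mem ψ hψP i

def IsFramed (n : ℕ) (m w : List α) : Prop :=
  ∃ (p q c d : α) (t : List α), c ≠ p ∧ d ≠ q ∧ c ≠ d ∧ t.length + 2 = n ∧
    m = [c] ++ t ++ [d] ∧ w = replicate n p ++ m ++ replicate n q

section FramedIndex

variable {n j : ℕ} {p q c d : α} {t : List α}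

lemma getElem?_frame_of_lt (hj : j < n) :
    (replicate n p ++ ([c] ++ t ++ [d]) ++ replicate n q)[j]? = some p := by
  simp [List.getElem?_append, hj]

lemma getElem?_frame_first :
    (replicate n p ++ ([c] ++ t ++ [d]) ++ replicate n q)[n]? = some c := by
  simp

lemma getElem?_frame_last (ht : t.length + 2 = n) :
    (replicate n p ++ ([c] ++ t ++ [d]) ++ replicate n q)[2 * n - 1]? = some d := by
  simp only [cons_append, nil_append, append_assoc, getElem?_append, length_replicate,
    getElem?_replicate]
  grind

lemma getElem?_frame_of_two_mul_le (ht : t.length + 2 = n) (hj₁ : 2 * n ≤ j) (hj₂ : j < 3 * n) :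
    (replicate n p ++ ([c] ++ t ++ [d]) ++ replicate n q)[j]? = some q := by
  simp only [cons_append, nil_append, append_assoc, getElem?_append, length_replicate,
    getElem?_replicate]
  grind

end FramedIndex

namespace IsFramed

variable {n : ℕ} {m m₁ m₂ w w₁ w₂ : List α}

lemma length_eq (h : IsFramed n m w) : w.length = 3 * n := by
  obtain ⟨p, q, c, d, t, -, -, -, ht, rfl, rfl⟩ := h
  simp only [List.length_append, List.length_replicate, List.length_singleton]
  omega

lemma map {θ : List α → List α} (hθ : LitAnti θ) (h : IsFramed n m w) :
    IsFramed n (θ m) (θ w) := by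
  obtain ⟨p, q, c, d, t, hcp, hdq, hcd, ht, rfl, rfl⟩ := h
  obtain ⟨p', hp⟩ := hθ.2.1 p
  obtain ⟨q', hq⟩ := hθ.2.1 q
  obtain ⟨c', hc⟩ := hθ.2.1 c
  obtain ⟨d', hd⟩ := hθ.2.1 d
  have hne : ∀ {a b a' b' : α}, a ≠ b → θ [a] = [a'] → θ [b] = [b'] → a' ≠ b' :=
    fun hab ha hb h => hab (List.singleton_injective (hθ.1.1 (by rw [ha, hb, h])))
  have ht' : (θ t).length + 2 = n := by rw [hθ.length_map]; exact ht
  rcases hθ.2.2 with hm | hA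
  · refine ⟨p', q', c', d', θ t, hne hcp hc hp, hne hdq hd hq, hne hcd hc hd, ht',
      by rw [hm, hm, hc, hd], ?_⟩
    rw [hm, hm, hθ.map_replicate n hp, hθ.map_replicate n hq]
  · refine ⟨q', p', d', c', θ t, hne hdq hd hq, hne hcp hc hp, hne hcd.symm hd hc, ht',
      by rw [hA.2, hA.2, hc, hd, List.append_assoc], ?_⟩
    rw [hA.2, hA.2, hθ.map_replicate n hp, hθ.map_replicate n hq]
    simp only [List.append_assoc]

lemma two_mul_le_of_append_eq {u v : List α} (h₁ : IsFramed n m₁ w₁) (h₂ : IsFramed n m₂ w₂)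
    (h : w₁ ++ u = v ++ w₂) (hv : v ≠ []) : 2 * n ≤ v.length := by
  have shift : ∀ j, v.length + j < 3 * n → w₂[j]? = w₁[v.length + j]? := fun j hj => by
    symm
    rw [← List.getElem?_append_left (l₂ := u) (by rw [h₁.length_eq]; exact hj), h,
      List.getElem?_append_right (by omega), Nat.add_sub_cancel_left]
  obtain ⟨p₁, q₁, c₁, d₁, t₁, hc₁p, hd₁q, hc₁d, ht₁, rfl, rfl⟩ := h₁
  obtain ⟨p₂, q₂, c₂, d₂, t₂, hc₂p, hd₂q, hc₂d, ht₂, rfl, rfl⟩ := h₂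
  have hv0 : 0 < v.length := List.length_pos_iff.2 hv
  by_contra! hshort
  rcases lt_trichotomy v.length n with hlt | heq | hgt
  · -- the last letter of `m₂` and the letter after it both face the suffix `q₁ⁿ`
    have hd : some d₂ = some q₁ := by
      rw [← getElem?_frame_last ht₂, shift _ (by omega),
        getElem?_frame_of_two_mul_le ht₁ (by omega) (by omega)]
    have hq : some q₂ = some q₁ := by
      rw [← getElem?_frame_of_two_mul_le ht₂ le_rfl (by omega), shift _ (by omega),
        getElem?_frame_of_two_mul_le ht₁ (by omega) (by omega)]
    exact hd₂q (Option.some_injective _ (hd.trans hq.symm))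
  · -- the prefix `p₂ⁿ` faces `m₁` exactly
    have hc : some p₂ = some c₁ := by
      rw [← getElem?_frame_of_lt (c := c₂) (d := d₂) (t := t₂) (q := q₂) (by omega : 0 < n),
        shift _ (by omega), heq, Nat.add_zero, getElem?_frame_first]
    have hd : some p₂ = some d₁ := by
      rw [← getElem?_frame_of_lt (c := c₂) (d := d₂) (t := t₂) (q := q₂) (by omega : n - 1 < n),
        shift _ (by omega), heq, show n + (n - 1) = 2 * n - 1 by omega, getElem?_frame_last ht₁]
    exact hc₁d (Option.some_injective _ (hc.symm.trans hd))
  · -- the first letter of `m₂` and the letter before it both face the suffix `q₁ⁿ`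
    have hc : some c₂ = some q₁ := by
      rw [← getElem?_frame_first (p := p₂) (t := t₂) (d := d₂) (q := q₂), shift _ (by omega),
        getElem?_frame_of_two_mul_le ht₁ (by omega) (by omega)]
    have hp : some p₂ = some q₁ := by
      rw [← getElem?_frame_of_lt (c := c₂) (d := d₂) (t := t₂) (q := q₂) (by omega : n - 1 < n),
        shift _ (by omega), getElem?_frame_of_two_mul_le ht₁ (by omega) (by omega)]
    exact hc₂p (Option.some_injective _ (hc.trans hp.symm))

lemma isInfix_of_append_eq {u v : List α} (h₁ : IsFramed n m₁ w₁) (h₂ : IsFramed n m₂ w₂)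
    (h : w₁ ++ u = v ++ w₂) (hu : u ≠ []) : m₁ <:+: v := by
  have hlen : v.length = u.length := by
    have := congrArg List.length h
    simp only [List.length_append, h₁.length_eq, h₂.length_eq] at this
    omega
  have hv : 2 * n ≤ v.length :=
    h₁.two_mul_le_of_append_eq h₂ h (List.ne_nil_of_length_pos (hlen ▸ List.length_pos_iff.2 hu))
  obtain ⟨p, q, c, d, t, -, -, -, ht, rfl, rfl⟩ := h₁
  have hpre : replicate n p ++ ([c] ++ t ++ [d]) <+: v :=
    List.prefix_of_prefix_length_le (l₃ := v ++ w₂)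
      ⟨replicate n q ++ u, by rw [← h]; simp only [List.append_assoc]⟩ (List.prefix_append _ _)
      (by simp only [List.length_append, List.length_replicate, List.length_singleton]; omega)
  exact (List.suffix_append _ _).isInfix.trans hpre.isInfix

end IsFramed

lemma LitAnti.exists_isFramed_of_mem_orbitZ {θ : List α → List α} (hθ : LitAnti θ)
    {X : Set (List α)} (hinv : Invariant θ X) {n : ℕ} {m z w : List α}
    (hm : m ∉ Factors (StarSet X)) (hz : IsFramed n m z) (hw : w ∈ OrbitZ θ z) :
    ∃ m', m' ∉ Factors (StarSet X) ∧ IsFramed n m' w := by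
  have step : ∀ {φ : List α → List α}, LitAnti φ → Invariant φ X → ∀ w,
      (∃ m', m' ∉ Factors (StarSet X) ∧ IsFramed n m' w) →
        ∃ m', m' ∉ Factors (StarSet X) ∧ IsFramed n m' (φ w) :=
    fun hφ hφX _ ⟨m', hm', hw⟩ => ⟨_, (hφ.map_mem_factors_iff hφX).not.2 hm', hw.map hφ⟩
  obtain ⟨ψ, hψ, hψX, hψθ⟩ := hθ.exists_leftInverse hinv
  exact mem_orbitZ_induction hψθ (step hθ hinv) (step hψ hψX) ⟨m, hm, hz⟩ hw

lemma exists_eq_append_of_append_append_eq {x₁ x₂ w₁ w₂ u : List α}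
    (hw : w₁.length = w₂.length) (h : x₁ ++ w₁ ++ u = x₂ ++ w₂) :
    ∃ v, x₂ = x₁ ++ v ∧ w₁ ++ u = v ++ w₂ := by
  rw [List.append_assoc] at h
  rcases List.append_eq_append_iff.1 h with ⟨v, hx, hw'⟩ | ⟨c, rfl, hc⟩
  · exact ⟨v, hx, hw'⟩
  · obtain rfl : c = [] := by
      have := congrArg List.length hc
      simp only [List.length_append] at this
      exact List.eq_nil_of_length_eq_zero (by omega)
    exact ⟨[], by simp, by simpa using hc.symm⟩

theorem stmt7_general (θ : List α → List α) (hθ : LitAnti θ)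
    (X : Set (List α)) (hinv : Invariant θ X)
    (a ab : α) (ha : a ≠ ab) (x y z : List α)
    (hy : y = [a] ++ x ++ [ab]) (hyF : y ∉ Factors (StarSet X))
    (hz : z = List.replicate y.length ab ++ y ++ List.replicate y.length a) :
    ∀ x₁ ∈ StarSet X, ∀ x₂ ∈ StarSet X, ∀ z₁ ∈ OrbitZ θ z, ∀ z₂ ∈ OrbitZ θ z,
      ∀ u : List α, x₁ ++ z₁ ++ u = x₂ ++ z₂ → u = [] := by
  intro x₁ _ x₂ hx₂ z₁ hz₁ z₂ hz₂ u heq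
  have hzy : IsFramed y.length y z :=
    ⟨ab, a, a, ab, x, ha, ha.symm, ha, by simp [hy], hy, hz⟩
  obtain ⟨m₁, hm₁, h₁⟩ := hθ.exists_isFramed_of_mem_orbitZ hinv hyF hzy hz₁
  obtain ⟨m₂, -, h₂⟩ := hθ.exists_isFramed_of_mem_orbitZ hinv hyF hzy hz₂
  obtain ⟨v, rfl, hv⟩ :=
    exists_eq_append_of_append_append_eq (h₁.length_eq.trans h₂.length_eq.symm) heq
  by_contra hu
  exact hm₁ ⟨x₁ ++ v, hx₂, factor_iff_isInfix.2 <|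
    (h₁.isInfix_of_append_eq h₂ hv hu).trans (List.suffix_append _ _).isInfix⟩

theorem stmt7 (θ : List α → List α) (hθ : LitAnti θ)
    (X : Set (List α)) (hcode : IsCode X) (hinv : Invariant θ X)
    (a ab : α) (ha : a ≠ ab) (x y z : List α)
    (hy : y = [a] ++ x ++ [ab]) (hyF : y ∉ Factors (StarSet X))
    (hz : z = List.replicate y.length ab ++ y ++ List.replicate y.length a) :
    ∀ x₁ ∈ StarSet X, ∀ x₂ ∈ StarSet X, ∀ z₁ ∈ OrbitZ θ z, ∀ z₂ ∈ OrbitZ θ z,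
      ∀ u : List α, x₁ ++ z₁ ++ u = x₂ ++ z₂ → u = [] :=
  stmt7_general θ hθ X hinv a ab ha x y z hy hyF hz
end

section
/- Let A = {a,b,c} and let θ be the antimorphism generated by the permutation σ with σ(a) = b, σ(b) = c, σ(c) = a. Then X = {ab, cb, ca, ba, bc, ac} is a θ-invariant code, X is not complete (a³ ∉ F(X*)), and with z = b⁴a³ba⁴, the set X ∪ {θⁱ(z) : i ∈ ℤ} = X ∪ {b⁴cb³c⁴, a⁴c³ac⁴, a⁴ba³b⁴, c⁴b³cb⁴, c⁴ac³a⁴, b⁴a³ba⁴} is again a θ-invariant code (indeed a prefix code union that remains prefix). -/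
/-!
The words of `X` have length two and two distinct letters, so in a word of `X*` the letters in
positions `2k` and `2k + 1` differ, and no cube `aaa` fits. As `σ³ = id`, `θ⁶ = id`; hence the
`ℤ`-orbit of a word is its forward orbit under `θ`, a `θ`-invariant set, and `X` is the orbit
of `ab`. The six conjugates of `z` all have length `12` and begin with a square `cc`, so no word
of `X` is a prefix of one of them, and `X` together with them is a prefix code.
-/

open List

variable {α : Type*}

/-- The antimorphism of `{a,b,c} = Fin 3` generated by the permutation
`σ(a) = b, σ(b) = c, σ(c) = a` (i.e. `x ↦ x + 1` on `Fin 3`). -/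
def theta16 (w : List (Fin 3)) : List (Fin 3) := (w.map (· + 1)).reverse

/-- `X = {ab, cb, ca, ba, bc, ac}` with `a = 0, b = 1, c = 2`. -/
def X16 : Set (List (Fin 3)) :=
  {[0, 1], [2, 1], [2, 0], [1, 0], [1, 2], [0, 2]}

/-- `z = b⁴a³ba⁴`. -/
def z16 : List (Fin 3) := [1, 1, 1, 1, 0, 0, 0, 1, 0, 0, 0, 0]

section Codes

variable {X Y : Set (List α)}

theorem IsPrefixCode.eq_of_append_eq_append (hX : IsPrefixCode X) {x y s t : List α}
    (hx : x ∈ X) (hy : y ∈ X) (h : x ++ s = y ++ t) : x = y := by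
  rcases append_eq_append_iff.mp h with ⟨u, rfl, -⟩ | ⟨u, rfl, -⟩
  · rw [hX.2 x hx u hy, append_nil]
  · rw [hX.2 y hy u hx, append_nil]

theorem IsPrefixCode.isCode (hX : IsPrefixCode X) : IsCode X := by
  intro l
  induction l with
  | nil =>
    rintro (_ | ⟨y, m⟩) - hm h
    · rfl
    · exact absurd ((append_eq_nil_iff.mp h.symm).1 ▸ hm y mem_cons_self) hX.1
  | cons x l ih =>
    rintro (_ | ⟨y, m⟩) hl hm h
    · exact absurd ((append_eq_nil_iff.mp h).1 ▸ hl x mem_cons_self) hX.1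
    · rw [forall_mem_cons] at hl hm
      obtain rfl := hX.eq_of_append_eq_append hl.1 hm.1 h
      rw [ih m hl.2 hm.2 (append_cancel_left h)]

theorem isPrefixCode_of_forall_length_eq {k : ℕ} (hk : 0 < k) (hX : ∀ x ∈ X, x.length = k) :
    IsPrefixCode X := by
  refine ⟨fun h => (hX [] h ▸ hk).ne rfl, fun x hx u hxu => ?_⟩
  have := hX _ hxu
  rw [length_append, hX x hx] at this
  exact length_eq_zero_iff.mp (by omega)

theorem IsPrefixCode.union (hX : IsPrefixCode X) (hY : IsPrefixCode Y)
    (hXY : ∀ x ∈ X, ∀ y ∈ Y, ¬ x <+: y ∧ ¬ y <+: x) : IsPrefixCode (X ∪ Y) := by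
  refine ⟨fun h => h.elim hX.1 hY.1, ?_⟩
  rintro x (hx | hx) u (hxu | hxu)
  · exact hX.2 x hx u hxu
  · exact absurd (prefix_append x u) (hXY x hx _ hxu).1
  · exact absurd (prefix_append x u) (hXY _ hxu x hx).2
  · exact hY.2 x hx u hxu

end Codes

section Squares

variable {X : Set (List α)}

theorem ne_of_flatten_eq_append (hX : ∀ u ∈ X, ∃ a b, a ≠ b ∧ u = [a, b]) :
    ∀ {l : List (List α)}, (∀ u ∈ l, u ∈ X) → ∀ {p s : List α} {a b : α},
      Even p.length → l.flatten = p ++ a :: b :: s → a ≠ b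
  | [], _, p, s, a, b, _, h => by simp at h
  | u :: l, hl, p, s, a, b, hp, h => by
    rw [forall_mem_cons] at hl
    obtain ⟨c, d, hcd, rfl⟩ := hX u hl.1
    match p, hp, h with
    | [], _, h =>
      simp only [flatten_cons, cons_append, nil_append, cons.injEq] at h
      exact h.1 ▸ h.2.1 ▸ hcd
    | [_], hp, _ => simp at hp
    | _ :: _ :: p, hp, h =>
      simp only [flatten_cons, cons_append, nil_append, cons.injEq] at h
      exact ne_of_flatten_eq_append hX hl.2 (by simpa [parity_simps] using hp) h.2.2

theorem cube_not_mem_factors_starSet (hX : ∀ u ∈ X, ∃ a b, a ≠ b ∧ u = [a, b]) (a : α) :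
    [a, a, a] ∉ Factors (StarSet X) := by
  rintro ⟨_, ⟨l, hl, rfl⟩, p, s, h⟩
  rcases Nat.even_or_odd p.length with hp | hp
  · exact ne_of_flatten_eq_append hX hl hp (s := a :: s) (a := a) (b := a) (by simp [← h]) rfl
  · refine ne_of_flatten_eq_append hX hl (p := p ++ [a]) (s := s) (a := a) (b := a)
      (by simpa [parity_simps] using hp) (by simp [← h]) rfl

end Squares

section Periodic

variable {f : List α → List α} {n : ℕ}

theorem Invariant.union {X Y : Set (List α)} (hX : Invariant f X) (hY : Invariant f Y) :
    Invariant f (X ∪ Y) := by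
  rw [Invariant, Set.image_union, hX, hY]

theorem orbitZ_eq_range_iterate (hn : 0 < n) (hf : f^[n] = id) (x : List α) :
    OrbitZ f x = Set.range (f^[·] x) := by
  ext y
  constructor
  · rintro ⟨i, rfl | h⟩
    · exact ⟨i, rfl⟩
    · refine ⟨(n - 1) * i, ?_⟩
      dsimp only
      rw [← h, ← Function.iterate_add_apply, ← add_one_mul, Nat.sub_one_add_one hn.ne',
        Function.iterate_mul, hf, Function.iterate_id, id]
  · rintro ⟨i, rfl⟩
    exact ⟨i, Or.inl rfl⟩

theorem invariant_orbitZ (hn : 0 < n) (hf : f^[n] = id) (x : List α) :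
    Invariant f (OrbitZ f x) := by
  rw [Invariant, orbitZ_eq_range_iterate hn hf, ← Set.range_comp]
  refine Set.Subset.antisymm ?_ ?_
  · rintro _ ⟨i, rfl⟩
    exact ⟨i + 1, Function.iterate_succ_apply' f i x⟩
  · rintro _ ⟨i, rfl⟩
    refine ⟨i + n - 1, ?_⟩
    rw [Function.comp_apply, ← Function.iterate_succ_apply' f, Nat.succ_eq_add_one,
      Nat.sub_add_cancel (by omega), Function.iterate_add_apply, hf, id]

theorem range_iterate_eq_setOf_mem_map_range (hn : 0 < n) (hf : f^[n] = id) (x : List α) :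
    Set.range (f^[·] x) = {y | y ∈ (List.range n).map (f^[·] x)} := by
  ext y
  simp only [Set.mem_range, Set.mem_ofPred_eq, List.mem_map, List.mem_range]
  constructor
  · rintro ⟨i, rfl⟩
    exact ⟨i % n, Nat.mod_lt i hn, Function.IsPeriodicPt.iterate_mod_apply (congrFun hf x) i⟩
  · rintro ⟨i, -, rfl⟩
    exact ⟨i, rfl⟩

end Periodic

theorem theta16_iterate_six : theta16^[6] = id := by
  have h : ∀ a : Fin 3, a + 1 + 1 + 1 + 1 + 1 + 1 = a := by decide
  funext w
  simp [theta16, Function.comp_def, h]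

theorem X16_eq_orbitZ : X16 = OrbitZ theta16 [0, 1] := by
  rw [orbitZ_eq_range_iterate (by norm_num) theta16_iterate_six,
    range_iterate_eq_setOf_mem_map_range (by norm_num) theta16_iterate_six,
    show (List.range 6).map (theta16^[·] [0, 1]) = [[0, 1], [2, 1], [2, 0], [1, 0], [1, 2], [0, 2]]
      by decide]
  ext w
  simp [X16]

theorem orbitZ_theta16_z16 : OrbitZ theta16 z16 =
    {[1,1,1,1,2,1,1,1,2,2,2,2], [0,0,0,0,2,2,2,0,2,2,2,2],
     [0,0,0,0,1,0,0,0,1,1,1,1], [2,2,2,2,1,1,1,2,1,1,1,1],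
     [2,2,2,2,0,2,2,2,0,0,0,0], [1,1,1,1,0,0,0,1,0,0,0,0]} := by
  rw [orbitZ_eq_range_iterate (by norm_num) theta16_iterate_six,
    range_iterate_eq_setOf_mem_map_range (by norm_num) theta16_iterate_six,
    show (List.range 6).map (theta16^[·] z16) =
      [[1,1,1,1,0,0,0,1,0,0,0,0], [1,1,1,1,2,1,1,1,2,2,2,2], [0,0,0,0,2,2,2,0,2,2,2,2],
       [0,0,0,0,1,0,0,0,1,1,1,1], [2,2,2,2,1,1,1,2,1,1,1,1], [2,2,2,2,0,2,2,2,0,0,0,0]]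
      by decide]
  ext w
  simp only [Set.mem_ofPred_eq, List.mem_cons, List.not_mem_nil, or_false, Set.mem_insert_iff,
    Set.mem_singleton_iff]
  tauto

theorem exists_eq_pair_of_mem_X16 : ∀ u ∈ X16, ∃ a b : Fin 3, a ≠ b ∧ u = [a, b] := by
  rintro u (rfl | rfl | rfl | rfl | rfl | rfl) <;> exact ⟨_, _, by decide, rfl⟩

theorem length_of_mem_orbitZ_theta16_z16 : ∀ y ∈ OrbitZ theta16 z16, y.length = 12 := by
  rw [orbitZ_theta16_z16]
  rintro y (rfl | rfl | rfl | rfl | rfl | rfl) <;> rfl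

theorem exists_eq_cons_cons_of_mem_orbitZ_theta16_z16 :
    ∀ y ∈ OrbitZ theta16 z16, ∃ (c : Fin 3) (t : List (Fin 3)), y = c :: c :: t := by
  rw [orbitZ_theta16_z16]
  rintro y (rfl | rfl | rfl | rfl | rfl | rfl) <;> exact ⟨_, _, rfl⟩

theorem isPrefixCode_X16 : IsPrefixCode X16 :=
  isPrefixCode_of_forall_length_eq two_pos fun u hu => by
    obtain ⟨a, b, -, rfl⟩ := exists_eq_pair_of_mem_X16 u hu
    rfl

theorem isPrefixCode_X16_union : IsPrefixCode (X16 ∪ OrbitZ theta16 z16) := by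
  refine isPrefixCode_X16.union
    (isPrefixCode_of_forall_length_eq (by norm_num) length_of_mem_orbitZ_theta16_z16) ?_
  intro x hx y hy
  obtain ⟨a, b, hab, rfl⟩ := exists_eq_pair_of_mem_X16 x hx
  have hlen := length_of_mem_orbitZ_theta16_z16 y hy
  obtain ⟨c, t, rfl⟩ := exists_eq_cons_cons_of_mem_orbitZ_theta16_z16 y hy
  refine ⟨fun h => hab ?_, fun h => ?_⟩
  · obtain ⟨rfl, rfl⟩ : a = c ∧ b = c := by simpa using h
    rfl
  · simpa [hlen] using h.length_le

theorem stmt16 :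
    Invariant theta16 X16 ∧ IsCode X16 ∧
    ([0, 0, 0] : List (Fin 3)) ∉ Factors (StarSet X16) ∧
    OrbitZ theta16 z16 =
      {[1,1,1,1,2,1,1,1,2,2,2,2], [0,0,0,0,2,2,2,0,2,2,2,2],
       [0,0,0,0,1,0,0,0,1,1,1,1], [2,2,2,2,1,1,1,2,1,1,1,1],
       [2,2,2,2,0,2,2,2,0,0,0,0], [1,1,1,1,0,0,0,1,0,0,0,0]} ∧
    Invariant theta16 (X16 ∪ OrbitZ theta16 z16) ∧
    IsCode (X16 ∪ OrbitZ theta16 z16) := by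
  have hinv : Invariant theta16 (OrbitZ theta16 z16) :=
    invariant_orbitZ (by norm_num) theta16_iterate_six z16
  have hX16 : Invariant theta16 X16 :=
    X16_eq_orbitZ ▸ invariant_orbitZ (by norm_num) theta16_iterate_six _
  exact ⟨hX16, isPrefixCode_X16.isCode, cube_not_mem_factors_starSet exists_eq_pair_of_mem_X16 0,
    orbitZ_theta16_z16, hX16.union hinv, isPrefixCode_X16_union.isCode⟩
end
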